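/- arXiv:1911.07796 — 5 statements merged into one kernel-verified Lean document; each statement's English description precedes it below -/
import Mathlib

section
/- Let R be an n×m matrix such that K_R(R) = {Rp : p ≥ 0} is a proper cone in ℝⁿ with every column of R nonzero. If there exists an m×m matrix P with all off-diagonal entries strictly positive such that AR = RP, then A satisfies the strict sub-tangentiality condition with respect to K_R(R): for all x ∈ K_R(R) \ {0} and y ∈ K_R(R)* \ {0} with ⟨y,x⟩ = 0, ⟨y,Ax⟩ > 0. -/
open Matrix Set

noncomputable section

/-- Dual cone of a set of vectors, w.r.t. the dot product. -/
def dualCone' {n : ℕ} (K : Set (Fin n → ℝ)) : Set (Fin n → ℝ) :=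
  {y | ∀ x ∈ K, 0 ≤ y ⬝ᵥ x}

/-- `K` is a proper cone: closed convex cone with nonempty interior containing no line. -/
def IsProperCone' {n : ℕ} (K : Set (Fin n → ℝ)) : Prop :=
  (∀ r₁ ∈ K, ∀ r₂ ∈ K, ∀ p₁ p₂ : ℝ, 0 ≤ p₁ → 0 ≤ p₂ → p₁ • r₁ + p₂ • r₂ ∈ K) ∧
  IsClosed K ∧ (interior K).Nonempty ∧ ∀ r ∈ K, r ≠ 0 → -r ∉ K

/-- Sub-tangentiality of `A` with respect to `K`. -/
def SubTang {n : ℕ} (A : Matrix (Fin n) (Fin n) ℝ) (K : Set (Fin n → ℝ)) : Prop :=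
  ∀ x ∈ K, ∀ y ∈ dualCone' K, y ⬝ᵥ x = 0 → 0 ≤ y ⬝ᵥ A.mulVec x

/-- Strict sub-tangentiality of `A` with respect to `K`. -/
def StrictSubTang {n : ℕ} (A : Matrix (Fin n) (Fin n) ℝ) (K : Set (Fin n → ℝ)) : Prop :=
  ∀ x ∈ K, x ≠ 0 → ∀ y ∈ dualCone' K, y ≠ 0 → y ⬝ᵥ x = 0 → 0 < y ⬝ᵥ A.mulVec x

/-- The polyhedral cone generated by the columns of `R` (R-representation). -/
def coneR {n m : ℕ} (R : Matrix (Fin n) (Fin m) ℝ) : Set (Fin n → ℝ) :=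
  {x | ∃ p : Fin m → ℝ, (∀ i, 0 ≤ p i) ∧ x = R.mulVec p}

/-!
Write `x = R p` with `p ≥ 0`, `p ≠ 0`. For `y` in the dual cone, `q = yᵀR` is nonnegative (pair `y` with
the columns of `R`) and nonzero (otherwise `y` would vanish on `K_R(R)`, which has nonempty interior).
Shifting `A` and `P` by the same `α • 1` keeps `A R = R P` and, as `⟨y, x⟩ = 0`, leaves `⟨y, A x⟩`
unchanged; for large `α` the matrix `P + α • 1` is entrywise positive, so
`⟨y, A x⟩ = qᵀ (P + α • 1) p > 0`.
-/

section Positivity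

variable {ι κ 𝕜 : Type*} [Fintype ι] [Fintype κ]
  [CommSemiring 𝕜] [PartialOrder 𝕜] [IsStrictOrderedRing 𝕜]

theorem dotProduct_pos_of_forall_pos_of_pos {u v : ι → 𝕜} (hu : ∀ i, 0 < u i) (hv : 0 < v) :
    0 < u ⬝ᵥ v := by
  obtain ⟨hv, i, hvi⟩ := Pi.lt_def.mp hv
  exact Finset.sum_pos' (fun j _ => mul_nonneg (hu j).le (hv j))
    ⟨i, Finset.mem_univ i, mul_pos (hu i) hvi⟩

theorem dotProduct_mulVec_pos {M : Matrix ι κ 𝕜} (hM : ∀ i j, 0 < M i j) {u : ι → 𝕜}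
    {v : κ → 𝕜} (hu : 0 < u) (hv : 0 < v) : 0 < u ⬝ᵥ M *ᵥ v := by
  rw [dotProduct_mulVec]
  refine dotProduct_pos_of_forall_pos_of_pos (fun j => ?_) hv
  rw [vecMul, dotProduct_comm]
  exact dotProduct_pos_of_forall_pos_of_pos (fun i => hM i j) hu

end Positivity

theorem Matrix.exists_add_smul_one_pos {ι : Type*} [Fintype ι] [DecidableEq ι]
    {P : Matrix ι ι ℝ} (hP : ∀ i j, i ≠ j → 0 < P i j) :
    ∃ α : ℝ, ∀ i j, 0 < (P + α • (1 : Matrix ι ι ℝ)) i j := by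
  refine ⟨1 + ∑ k, |P k k|, fun i j => ?_⟩
  by_cases hij : i = j
  · subst hij
    have hdiag : |P i i| ≤ ∑ k, |P k k| :=
      Finset.single_le_sum (fun k _ => abs_nonneg (P k k)) (Finset.mem_univ i)
    simp only [add_apply, smul_apply, one_apply_eq, smul_eq_mul, mul_one]
    linarith [neg_abs_le (P i i)]
  · simp [one_apply_ne hij, hP i j hij]

theorem eq_zero_of_forall_mem_dotProduct_eq_zero {ι : Type*} [Fintype ι] {K : Set (ι → ℝ)}
    (hK : (interior K).Nonempty) {y : ι → ℝ} (hy : ∀ x ∈ K, y ⬝ᵥ x = 0) : y = 0 := by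
  have hker : LinearMap.ker (dotProductBilin ℝ ℝ y) = ⊤ :=
    Submodule.eq_top_of_nonempty_interior' _ (hK.mono (interior_mono hy))
  refine dotProduct_eq_zero y fun w => ?_
  have hw : w ∈ LinearMap.ker (dotProductBilin ℝ ℝ y) := hker ▸ Submodule.mem_top
  simpa using hw

section ConeR

variable {n m : ℕ} {R : Matrix (Fin n) (Fin m) ℝ}

theorem exists_pos_of_mem_coneR {x : Fin n → ℝ} (hx : x ∈ coneR R) (hx0 : x ≠ 0) :
    ∃ p, 0 < p ∧ x = R *ᵥ p := by
  obtain ⟨p, hp, rfl⟩ := hx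
  refine ⟨p, lt_of_le_of_ne hp ?_, rfl⟩
  rintro rfl
  exact hx0 (mulVec_zero R)

theorem vecMul_nonneg_of_mem_dualCone' {y : Fin n → ℝ} (hy : y ∈ dualCone' (coneR R)) :
    0 ≤ y ᵥ* R := by
  intro j
  have hsingle : (0 : Fin m → ℝ) ≤ Pi.single j 1 := Pi.single_nonneg.mpr zero_le_one
  have hcol : R *ᵥ Pi.single j 1 ∈ coneR R := ⟨Pi.single j 1, hsingle, rfl⟩
  have h := hy _ hcol
  rwa [dotProduct_mulVec, dotProduct_single, mul_one] at h

theorem vecMul_pos_of_mem_dualCone' (hK : (interior (coneR R)).Nonempty) {y : Fin n → ℝ}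
    (hy : y ∈ dualCone' (coneR R)) (hy0 : y ≠ 0) : 0 < y ᵥ* R := by
  refine lt_of_le_of_ne (vecMul_nonneg_of_mem_dualCone' hy) fun h => hy0 ?_
  refine eq_zero_of_forall_mem_dotProduct_eq_zero hK ?_
  rintro _ ⟨p, -, rfl⟩
  rw [dotProduct_mulVec, ← h, zero_dotProduct]

end ConeR

theorem stmt3_general {n m : ℕ} (R : Matrix (Fin n) (Fin m) ℝ)
    (hK : IsProperCone' (coneR R))
    (A : Matrix (Fin n) (Fin n) ℝ) (P : Matrix (Fin m) (Fin m) ℝ)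
    (hP : ∀ i j, i ≠ j → 0 < P i j) (hAR : A * R = R * P) :
    StrictSubTang A (coneR R) := by
  rintro x hx hx0 y hy hy0 hyx
  obtain ⟨p, hp, rfl⟩ := exists_pos_of_mem_coneR hx hx0
  obtain ⟨α, hPα⟩ := exists_add_smul_one_pos hP
  have hshift : (A + α • 1) * R = R * (P + α • 1) := by
    rw [Matrix.add_mul, Matrix.mul_add, hAR, Matrix.smul_mul, Matrix.mul_smul, Matrix.one_mul,
      Matrix.mul_one]
  calc 0 < y ᵥ* R ⬝ᵥ (P + α • 1) *ᵥ p :=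
        dotProduct_mulVec_pos hPα (vecMul_pos_of_mem_dualCone' hK.2.2.1 hy hy0) hp
    _ = y ⬝ᵥ (A + α • 1) *ᵥ R *ᵥ p := by
      rw [← dotProduct_mulVec, mulVec_mulVec, ← hshift, ← mulVec_mulVec]
    _ = y ⬝ᵥ A *ᵥ R *ᵥ p := by
      rw [add_mulVec, dotProduct_add, smul_mulVec, one_mulVec, dotProduct_smul, hyx, smul_zero,
        add_zero]

theorem stmt3 {n m : ℕ} (R : Matrix (Fin n) (Fin m) ℝ)
    (hK : IsProperCone' (coneR R))
    (hcols : ∀ j, (fun i => R i j) ≠ (0 : Fin n → ℝ))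
    (A : Matrix (Fin n) (Fin n) ℝ) (P : Matrix (Fin m) (Fin m) ℝ)
    (hP : ∀ i j, i ≠ j → 0 < P i j) (hAR : A * R = R * P) :
    StrictSubTang A (coneR R) :=
  stmt3_general R hK A P hP hAR
end
end

section
/- Let R, R' be n×m matrices and M an m×m matrix with 1ᵀM = 1ᵀ, nonpositive off-diagonal entries, and R'' = R'M. Then K_R(R') ⊆ K_R(R''), i.e., every conic combination of the columns of R' is a conic combination of the columns of R''. -/
/-!
Let `M` be a Z-matrix (nonpositive off-diagonal entries) whose columns have positive sums.
If `M q ≥ 0`, sum the entries of `M q` over the set `S` of indices where `q` is negative: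
a column `j ∈ S` contributes `q j` times its sum over `S`, which is at least its full column sum,
hence a negative amount, while a column `j ∉ S` contributes a nonpositive amount. So `S` is empty,
i.e. `M` is inverse-positive. In particular `M` is injective, hence bijective, and `M⁻¹ p ≥ 0`
for `p ≥ 0`; then `R' p = R' M (M⁻¹ p)` lies in the cone of `R' M`.
-/

open Matrix Set

noncomputable section

namespace Matrix

variable {ι 𝕜 : Type*} [Fintype ι] [Field 𝕜] [LinearOrder 𝕜] [IsStrictOrderedRing 𝕜]
  {M : Matrix ι ι 𝕜}

theorem nonneg_of_mulVec_nonneg_of_colSum_pos (hcol : ∀ j, 0 < ∑ i, M i j)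
    (hoff : ∀ i j, i ≠ j → M i j ≤ 0) {q : ι → 𝕜} (hMq : 0 ≤ M *ᵥ q) : 0 ≤ q := by
  intro i
  by_contra! hi
  set S := Finset.univ.filter fun k => q k < 0
  have hS_sum : ∑ k ∈ S, (M *ᵥ q) k = ∑ j, (∑ k ∈ S, M k j) * q j := by
    simp only [mulVec, dotProduct, Finset.sum_mul]
    exact Finset.sum_comm
  have hterm_nonpos : ∀ j ∉ S, (∑ k ∈ S, M k j) * q j ≤ 0 := by
    intro j hj
    refine mul_nonpos_of_nonpos_of_nonneg (Finset.sum_nonpos fun k hk => hoff k j ?_) ?_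
    · rintro rfl; exact hj hk
    · simpa [S] using hj
  have hterm_neg : ∀ j ∈ S, (∑ k ∈ S, M k j) * q j < 0 := by
    intro j hj
    have hrest : ∑ k ∈ Finset.univ.filter (fun k => ¬ q k < 0), M k j ≤ 0 :=
      Finset.sum_nonpos fun k hk => hoff k j fun hkj =>
        (Finset.mem_filter.mp hk).2 (hkj ▸ (Finset.mem_filter.mp hj).2)
    have hsplit := Finset.sum_filter_add_sum_filter_not Finset.univ (fun k => q k < 0) (M · j)
    refine mul_neg_of_pos_of_neg ?_ (by simpa [S] using hj)
    linarith [hcol j]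
  have hneg : ∑ j, (∑ k ∈ S, M k j) * q j < 0 := by
    refine (Finset.sum_lt_sum (g := fun _ => 0) (fun j _ => ?_) ⟨i, Finset.mem_univ i, ?_⟩).trans_eq
      Finset.sum_const_zero
    · by_cases hj : j ∈ S
      · exact (hterm_neg j hj).le
      · exact hterm_nonpos j hj
    · exact hterm_neg i (by simpa [S] using hi)
  have hpos : 0 ≤ ∑ k ∈ S, (M *ᵥ q) k := Finset.sum_nonneg fun k _ => hMq k
  linarith

theorem exists_nonneg_mulVec_eq_of_colSum_pos (hcol : ∀ j, 0 < ∑ i, M i j)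
    (hoff : ∀ i j, i ≠ j → M i j ≤ 0) {p : ι → 𝕜} (hp : 0 ≤ p) :
    ∃ q, 0 ≤ q ∧ M *ᵥ q = p := by
  have hinj : Function.Injective M.mulVecLin := by
    rw [← LinearMap.ker_eq_bot, LinearMap.ker_eq_bot']
    intro q hq
    rw [mulVecLin_apply] at hq
    have hle := nonneg_of_mulVec_nonneg_of_colSum_pos hcol hoff hq.ge
    have hge := nonneg_of_mulVec_nonneg_of_colSum_pos hcol hoff (q := -q) (by simp [mulVec_neg, hq])
    exact le_antisymm (neg_nonneg.mp hge) hle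
  obtain ⟨q, hq⟩ := LinearMap.injective_iff_surjective.mp hinj p
  rw [mulVecLin_apply] at hq
  exact ⟨q, nonneg_of_mulVec_nonneg_of_colSum_pos hcol hoff (hq ▸ hp), hq⟩

end Matrix

theorem stmt8_general {n m : ℕ} (R' : Matrix (Fin n) (Fin m) ℝ)
    (M : Matrix (Fin m) (Fin m) ℝ)
    (hcol : ∀ j, ∑ i, M i j = 1)
    (hoff : ∀ i j, i ≠ j → M i j ≤ 0)
    (R'' : Matrix (Fin n) (Fin m) ℝ) (hR'' : R'' = R' * M) :
    coneR R' ⊆ coneR R'' := by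
  rintro x ⟨p, hp, rfl⟩
  obtain ⟨q, hq, hMq⟩ :=
    exists_nonneg_mulVec_eq_of_colSum_pos (fun j => (hcol j).symm ▸ one_pos) hoff hp
  exact ⟨q, hq, by rw [hR'', ← mulVec_mulVec, hMq]⟩

theorem stmt8 {n m : ℕ} (R R' : Matrix (Fin n) (Fin m) ℝ)
    (M : Matrix (Fin m) (Fin m) ℝ)
    (hcol : ∀ j, ∑ i, M i j = 1)
    (hoff : ∀ i j, i ≠ j → M i j ≤ 0)
    (R'' : Matrix (Fin n) (Fin m) ℝ) (hR'' : R'' = R' * M) :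
    coneR R' ⊆ coneR R'' :=
  stmt8_general R' M hcol hoff R'' hR''
end
end

section
/- If K_H(H) = {x ∈ ℝⁿ : Hx ≥ 0} is a proper cone and there exists a matrix P with nonnegative off-diagonal entries such that HA = PH, then A satisfies the sub-tangentiality condition with respect to K_H(H). -/
/-
For `x ∈ K = {x : Hx ≥ 0}` write `u = Hx ≥ 0`; then `H(Ax) = PHx = Pu`. Where `u_i = 0`,
`(Pu)_i = ∑_{j ≠ i} P_ij u_j ≥ 0` because the off-diagonal entries of `P` are nonnegative; where
`u_i > 0` there is slack. Hence `x + t Ax ∈ K` for some `t > 0`, i.e. `Ax` is a feasible direction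
of `K` at `x`. If `y ∈ K*` and `⟨y, x⟩ = 0`, then `0 ≤ ⟨y, x + t Ax⟩ = t ⟨y, Ax⟩`, so `⟨y, Ax⟩ ≥ 0`.
-/

open Matrix Set

noncomputable section

/-- All off-diagonal entries of `P` are nonnegative. -/
def OffdiagNonneg {m : ℕ} (P : Matrix (Fin m) (Fin m) ℝ) : Prop :=
  ∀ i j, i ≠ j → 0 ≤ P i j

/-- The polyhedral cone `{x : H x ≥ 0}` (H-representation). -/
def coneH {n k : ℕ} (H : Matrix (Fin k) (Fin n) ℝ) : Set (Fin n → ℝ) :=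
  {x | ∀ i, 0 ≤ H.mulVec x i}

open Filter Topology

lemma OffdiagNonneg.mulVec_apply_nonneg_of_eq_zero {m : ℕ} {P : Matrix (Fin m) (Fin m) ℝ}
    (hP : OffdiagNonneg P) {u : Fin m → ℝ} (hu : 0 ≤ u) {i : Fin m} (hui : u i = 0) :
    0 ≤ (P *ᵥ u) i := by
  simp only [mulVec, dotProduct]
  refine Finset.sum_nonneg fun j _ => ?_
  rcases eq_or_ne i j with rfl | hij
  · simp [hui]
  · exact mul_nonneg (hP i j hij) (hu j)

lemma exists_pos_add_smul_nonneg {ι : Type*} [Finite ι] {u w : ι → ℝ} (hu : 0 ≤ u)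
    (hw : ∀ i, u i = 0 → 0 ≤ w i) : ∃ t : ℝ, 0 < t ∧ 0 ≤ u + t • w := by
  have hev : ∀ i, ∀ᶠ t in 𝓝[>] (0 : ℝ), 0 ≤ u i + t * w i := by
    intro i
    rcases (hu i).eq_or_lt with hui | hui
    · filter_upwards [self_mem_nhdsWithin] with t (ht : 0 < t)
      simpa [← hui] using mul_nonneg ht.le (hw i hui.symm)
    · have hcont : Continuous fun t : ℝ => u i + t * w i := by fun_prop
      have hlim : Tendsto (fun t : ℝ => u i + t * w i) (𝓝[>] 0) (𝓝 (u i)) :=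
        (hcont.tendsto' 0 _ (by simp)).mono_left nhdsWithin_le_nhds
      exact (hlim.eventually (lt_mem_nhds hui)).mono fun _ h => h.le
  obtain ⟨t, ht, htpos⟩ := ((eventually_all.2 hev).and self_mem_nhdsWithin).exists
  exact ⟨t, htpos, fun i => ht i⟩

lemma subTang_of_forall_exists_add_smul_mem {n : ℕ} {A : Matrix (Fin n) (Fin n) ℝ}
    {K : Set (Fin n → ℝ)} (h : ∀ x ∈ K, ∃ t : ℝ, 0 < t ∧ x + t • (A *ᵥ x) ∈ K) :
    SubTang A K := by
  intro x hx y hy hyx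
  obtain ⟨t, ht, hmem⟩ := h x hx
  have hdual := hy _ hmem
  rw [dotProduct_add, dotProduct_smul, hyx, zero_add, smul_eq_mul] at hdual
  exact nonneg_of_mul_nonneg_right hdual ht

theorem stmt10_general {n k : ℕ} (H : Matrix (Fin k) (Fin n) ℝ)
    (A : Matrix (Fin n) (Fin n) ℝ) (P : Matrix (Fin k) (Fin k) ℝ)
    (hP : OffdiagNonneg P) (hHA : H * A = P * H) :
    SubTang A (coneH H) := by
  refine subTang_of_forall_exists_add_smul_mem fun x hx => ?_
  have hu : 0 ≤ H *ᵥ x := hx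
  have hHAx : H *ᵥ (A *ᵥ x) = P *ᵥ (H *ᵥ x) := by
    rw [mulVec_mulVec, mulVec_mulVec, hHA]
  obtain ⟨t, ht, hnonneg⟩ := exists_pos_add_smul_nonneg (w := H *ᵥ (A *ᵥ x)) hu fun i hi => by
    rw [hHAx]
    exact hP.mulVec_apply_nonneg_of_eq_zero hu hi
  refine ⟨t, ht, fun i => ?_⟩
  rw [mulVec_add, mulVec_smul]
  exact hnonneg i

theorem stmt10 {n k : ℕ} (H : Matrix (Fin k) (Fin n) ℝ)
    (hK : IsProperCone' (coneH H))
    (A : Matrix (Fin n) (Fin n) ℝ) (P : Matrix (Fin k) (Fin k) ℝ)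
    (hP : OffdiagNonneg P) (hHA : H * A = P * H) :
    SubTang A (coneH H) :=
  stmt10_general H A P hP hHA
end
end

section
/- Let K be a proper cone in ℝⁿ and A a matrix satisfying strict sub-tangentiality with respect to K. Suppose r̄ is an eigenvector of A with real eigenvalue λ and r̄ ∈ K \ {0}. Then r̄ ∈ int(K) or, if r̄ lies on the boundary of K, a contradiction arises; hence every eigenvector of A lying in K \ {0} must lie in the interior of K. -/
open Matrix Set

noncomputable section

/-! A point on the boundary of a convex cone with nonempty interior lies on a supporting
hyperplane through the origin, i.e. it is annihilated by a nonzero vector of the dual cone `y`.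
At an eigenvector `r̄` on the boundary, strict sub-tangentiality would then give
`0 < y ⬝ᵥ A r̄ = λ (y ⬝ᵥ r̄) = 0`. -/

theorem exists_dotProduct_eq_dual {ι R : Type*} [Fintype ι] [CommSemiring R]
    (f : Module.Dual R (ι → R)) : ∃ y : ι → R, ∀ x, y ⬝ᵥ x = f x := by
  classical
  exact ⟨(dotProductEquiv R ι).symm f, fun x => by
    rw [← dotProductEquiv_apply_apply, LinearEquiv.apply_symm_apply]⟩

theorem exists_mem_dualCone'_ne_zero_dotProduct_eq_zero {n : ℕ} {K : Set (Fin n → ℝ)}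
    (hcone : ∀ r₁ ∈ K, ∀ r₂ ∈ K, ∀ p₁ p₂ : ℝ, 0 ≤ p₁ → 0 ≤ p₂ → p₁ • r₁ + p₂ • r₂ ∈ K)
    (hint : (interior K).Nonempty) {x : Fin n → ℝ} (hx : x ∈ K) (hxi : x ∉ interior K) :
    ∃ y ∈ dualCone' K, y ≠ 0 ∧ y ⬝ᵥ x = 0 := by
  have hconv : Convex ℝ K := fun r₁ h₁ r₂ h₂ p₁ p₂ hp₁ hp₂ _ => hcone r₁ h₁ r₂ h₂ p₁ p₂ hp₁ hp₂
  obtain ⟨f, u, hf0, hfK, hux⟩ := geometric_hahn_banach_of_nonempty_interior hconv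
    (convex_singleton x) (disjoint_singleton_right.2 hxi) hint (singleton_nonempty x)
  have hfx : f x = u := le_antisymm (hfK x hx) (hux x rfl)
  have hsmul : ∀ t : ℝ, 0 ≤ t → t • x ∈ K := fun t ht => by
    simpa using hcone x hx x hx t 0 ht le_rfl
  -- `0 • x` and `2 • x` lie in `K`, so `0 ≤ f x` and `2 f x ≤ f x`.
  have hu : u = 0 := by
    have h₀ := hfK _ (hsmul 0 le_rfl)
    have h₂ := hfK _ (hsmul 2 zero_le_two)
    simp only [map_smul, smul_eq_mul, zero_mul] at h₀ h₂
    linarith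
  obtain ⟨y, hy⟩ := exists_dotProduct_eq_dual (f : Module.Dual ℝ (Fin n → ℝ))
  simp only [ContinuousLinearMap.coe_coe] at hy
  refine ⟨-y, fun z hz => ?_, neg_ne_zero.2 ?_, ?_⟩
  · rw [neg_dotProduct, hy]
    linarith [hfK z hz]
  · rintro rfl
    exact hf0 (ContinuousLinearMap.ext fun z => by simpa using (hy z).symm)
  · rw [neg_dotProduct, hy, hfx, hu, neg_zero]

theorem stmt14 {n : ℕ} (K : Set (Fin n → ℝ)) (hK : IsProperCone' K)
    (A : Matrix (Fin n) (Fin n) ℝ) (hA : StrictSubTang A K)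
    (lam : ℝ) (rbar : Fin n → ℝ) (heig : A.mulVec rbar = lam • rbar)
    (hmem : rbar ∈ K) (hne : rbar ≠ 0) :
    rbar ∈ interior K := by
  by_contra hbdry
  obtain ⟨y, hyK, hy0, hyr⟩ :=
    exists_mem_dualCone'_ne_zero_dotProduct_eq_zero hK.1 hK.2.2.1 hmem hbdry
  have hpos := hA rbar hmem hne y hyK hy0 hyr
  rw [heig, dotProduct_smul, hyr, smul_zero] at hpos
  exact lt_irrefl 0 hpos
end
end

section
/- Suppose the n×n matrix A leaves the proper cone K invariant in the sense of sub-tangentiality (x ∈ K, y ∈ K*, ⟨y,x⟩ = 0 ⟹ ⟨y,Ax⟩ ≥ 0). Then for every t ≥ 0 and every x₀ ∈ K, the solution x(t) = exp(tA)x₀ of ẋ = Ax satisfies x(t) ∈ K. (Forward invariance of closed convex cones under sub-tangential linear flows.) -/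
open Matrix Set

noncomputable section

/-! If `p u` is the point of the closed convex cone `C` nearest to `u`, then `p u - u` lies in the
dual cone and is orthogonal to `p u`, so sub-tangentiality at `p u` gives
`⟪u - p u, B (p u)⟫ ≤ 0`, whence `⟪u - p u, B u⟫ ≤ ‖B‖ ‖u - p u‖²`. Along a trajectory `x' = B x`
the function `f t = dist (x t, C)²` is touched from above at each `t` by the smooth function
`z ↦ ‖x z - p (x t)‖²`, so its right Dini derivative is at most `2 ‖B‖ f t`. Gronwall's inequality
with `f 0 = 0` then gives `f = 0` on `[0, ∞)`. -/

open scoped RealInnerProductSpace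
open Metric Filter Topology

theorem frequently_slope_lt_of_le_of_hasDerivAt {f φ : ℝ → ℝ} {t φ' r : ℝ} (hle : f ≤ φ)
    (heq : f t = φ t) (hφ : HasDerivAt φ φ' t) (hr : φ' < r) :
    ∃ᶠ z in 𝓝[>] t, slope f t z < r := by
  refine ((hφ.hasDerivWithinAt.liminf_right_slope_le hr).and_eventually
    self_mem_nhdsWithin).mono fun z ⟨hz, hzt⟩ => lt_of_le_of_lt ?_ hz
  rw [slope_def_field, slope_def_field, heq]
  exact div_le_div_of_nonneg_right (by linarith [hle z]) (sub_pos.2 hzt).le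

namespace ProperCone

variable {E : Type*} [NormedAddCommGroup E] [InnerProductSpace ℝ E] [CompleteSpace E]
  (C : ProperCone ℝ E)

def IsSubtangent (B : E →L[ℝ] E) : Prop :=
  ∀ x ∈ C, ∀ y ∈ innerDual (C : Set E), ⟪x, y⟫ = 0 → 0 ≤ ⟪B x, y⟫

theorem exists_nearest_point (u : E) :
    ∃ p ∈ C, infDist u C = ‖u - p‖ ∧ p - u ∈ innerDual (C : Set E) ∧ ⟪p, p - u⟫ = 0 := by
  obtain ⟨p, hpC, hp⟩ := exists_norm_eq_iInf_of_complete_convex ⟨0, C.zero_mem⟩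
    C.isClosed.isComplete C.convex u
  have hvar : ∀ w ∈ C, 0 ≤ ⟪w - p, p - u⟫ := fun w hw => by
    rw [← neg_sub u p, inner_neg_right, real_inner_comm]
    linarith [(norm_eq_iInf_iff_real_inner_le_zero C.convex hpC).1 hp w hw]
  have horth : ⟪p, p - u⟫ = 0 := by
    have h0 := hvar 0 C.zero_mem
    have h2 := hvar (p + p) (C.add_mem hpC hpC)
    rw [zero_sub, inner_neg_left] at h0
    rw [add_sub_cancel_right] at h2
    linarith
  refine ⟨p, hpC, by simp [infDist_eq_iInf, hp, dist_eq_norm], mem_innerDual.2 fun w hw => ?_,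
    horth⟩
  have := hvar w hw
  rw [inner_sub_left, horth] at this
  linarith

namespace IsSubtangent

variable {C} {B : E →L[ℝ] E}

theorem inner_sub_apply_le (hB : C.IsSubtangent B) {u p : E} (hpC : p ∈ C)
    (hdual : p - u ∈ innerDual (C : Set E)) (horth : ⟪p, p - u⟫ = 0) :
    ⟪u - p, B u⟫ ≤ ‖B‖ * ‖u - p‖ ^ 2 := by
  have hp : ⟪u - p, B p⟫ ≤ 0 := by
    have := hB p hpC _ hdual horth
    rw [real_inner_comm, ← neg_sub, inner_neg_left] at this
    linarith
  have hup : ⟪u - p, B (u - p)⟫ ≤ ‖B‖ * ‖u - p‖ ^ 2 :=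
    calc ⟪u - p, B (u - p)⟫ ≤ ‖u - p‖ * ‖B (u - p)‖ := real_inner_le_norm _ _
      _ ≤ ‖u - p‖ * (‖B‖ * ‖u - p‖) := by gcongr; exact B.le_opNorm _
      _ = ‖B‖ * ‖u - p‖ ^ 2 := by ring
  have hsplit : B u = B p + B (u - p) := by rw [← map_add, add_sub_cancel]
  rw [hsplit, inner_add_right]
  linarith

theorem mem_of_hasDerivAt (hB : C.IsSubtangent B) {x : ℝ → E}
    (hx : ∀ t, HasDerivAt x (B (x t)) t) (hx₀ : x 0 ∈ C) {T : ℝ} (hT : 0 ≤ T) : x T ∈ C := by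
  choose p hpC hpdist hpdual hporth using C.exists_nearest_point
  set f : ℝ → ℝ := fun t => infDist (x t) C ^ 2
  have hxc : Continuous x := continuous_iff_continuousAt.2 fun t => (hx t).continuousAt
  have hf : Continuous f := ((continuous_infDist_pt _).comp hxc).pow 2
  have hslope : ∀ t, ∀ r, 2 * ⟪x t - p (x t), B (x t)⟫ < r →
      ∃ᶠ z in 𝓝[>] t, slope f t z < r := fun t r hr => by
    refine frequently_slope_lt_of_le_of_hasDerivAt (φ := fun z => ‖x z - p (x t)‖ ^ 2)
      (fun z => ?_) (by simp only [f, hpdist]) ((hx t).sub_const _).norm_sq hr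
    have := infDist_le_dist_of_mem (x := x z) (hpC (x t))
    rw [dist_eq_norm] at this
    exact pow_le_pow_left₀ infDist_nonneg this 2
  have hbound : ∀ t, 2 * ⟪x t - p (x t), B (x t)⟫ ≤ 2 * ‖B‖ * f t + 0 := fun t => by
    have := hB.inner_sub_apply_le (hpC (x t)) (hpdual (x t)) (hporth (x t))
    simp only [f, hpdist]
    linarith
  have hfT : f T ≤ 0 := by
    simpa [gronwallBound_ε0_δ0] using le_gronwallBound_of_liminf_deriv_right_le hf.continuousOn
      (fun t _ => hslope t) (δ := 0) (by simp [f, infDist_zero_of_mem hx₀])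
      (fun t _ => hbound t) T ⟨hT, le_rfl⟩
  refine (C.isClosed.mem_iff_infDist_zero ⟨0, C.zero_mem⟩).2 ?_
  exact pow_eq_zero_iff two_ne_zero |>.1 (le_antisymm hfT (sq_nonneg _))

end IsSubtangent

end ProperCone

section MatrixExp

-- `NormedSpace.exp` depends only on the topology, so any algebra norm on matrices will do.
attribute [local instance] Matrix.linftyOpNormedRing Matrix.linftyOpNormedAlgebra

theorem Matrix.hasDerivAt_exp_smul_mulVec {m : Type*} [Fintype m] [DecidableEq m]
    (A : Matrix m m ℝ) (x₀ : m → ℝ) (t : ℝ) :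
    HasDerivAt (fun u : ℝ => NormedSpace.exp (u • A) *ᵥ x₀)
      (A *ᵥ (NormedSpace.exp (t • A) *ᵥ x₀)) t := by
  let L := LinearMap.toContinuousLinearMap
    (LinearMap.applyₗ x₀ ∘ₗ (Matrix.toLin' : Matrix m m ℝ ≃ₗ[ℝ] _).toLinearMap)
  rw [mulVec_mulVec]
  exact L.hasFDerivAt.comp_hasDerivAt t (hasDerivAt_exp_smul_const' A t)

end MatrixExp

-- `K` viewed in `EuclideanSpace`: the nearest-point argument needs the Euclidean norm, not the sup
-- norm of `Fin n → ℝ`.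
def IsProperCone'.toProperCone {n : ℕ} {K : Set (Fin n → ℝ)} (hK : IsProperCone' K) :
    ProperCone ℝ (EuclideanSpace ℝ (Fin n)) where
  carrier := WithLp.ofLp ⁻¹' K
  add_mem' hx hy := by simpa using hK.1 _ hx _ hy 1 1 zero_le_one zero_le_one
  zero_mem' := by
    obtain ⟨k, hk⟩ := hK.2.2.1
    simpa using hK.1 k (interior_subset hk) k (interior_subset hk) 0 0 le_rfl le_rfl
  smul_mem' c x hx := by simpa [NNReal.smul_def] using hK.1 _ hx _ hx c 0 c.2 le_rfl
  isClosed' := hK.2.1.preimage (PiLp.continuous_ofLp _ _)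

@[simp]
theorem IsProperCone'.mem_toProperCone {n : ℕ} {K : Set (Fin n → ℝ)} (hK : IsProperCone' K)
    {x : EuclideanSpace ℝ (Fin n)} : x ∈ hK.toProperCone ↔ WithLp.ofLp x ∈ K :=
  Iff.rfl

theorem SubTang.isSubtangent_toEuclideanCLM {n : ℕ} {A : Matrix (Fin n) (Fin n) ℝ}
    {K : Set (Fin n → ℝ)} (hA : SubTang A K) (hK : IsProperCone' K) :
    hK.toProperCone.IsSubtangent (Matrix.toEuclideanCLM (𝕜 := ℝ) A) := by
  intro x hx y hy hxy
  have hinner (u v : EuclideanSpace ℝ (Fin n)) : ⟪u, v⟫ = WithLp.ofLp v ⬝ᵥ WithLp.ofLp u := by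
    simp [EuclideanSpace.inner_eq_star_dotProduct]
  rw [hinner] at hxy ⊢
  refine hA _ hx _ (fun w hw => ?_) hxy
  simpa [hinner] using hy (x := WithLp.toLp 2 w) hw

theorem stmt17 {n : ℕ} (K : Set (Fin n → ℝ)) (hK : IsProperCone' K)
    (A : Matrix (Fin n) (Fin n) ℝ) (hA : SubTang A K) :
    ∀ t : ℝ, 0 ≤ t → ∀ x₀ ∈ K, (NormedSpace.exp (t • A)).mulVec x₀ ∈ K := by
  intro t ht x₀ hx₀
  have hx (s : ℝ) : HasDerivAt (fun s => WithLp.toLp 2 (NormedSpace.exp (s • A) *ᵥ x₀))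
      (Matrix.toEuclideanCLM (𝕜 := ℝ) A (WithLp.toLp 2 (NormedSpace.exp (s • A) *ᵥ x₀))) s :=
    (PiLp.hasFDerivAt_toLp 2 _).comp_hasDerivAt s (A.hasDerivAt_exp_smul_mulVec x₀ s)
  exact (hA.isSubtangent_toEuclideanCLM hK).mem_of_hasDerivAt hx (by simpa using hx₀) ht
end
end
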